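/- arXiv:1802.02469 — 7 statements merged into one kernel-verified Lean document; each statement's English description precedes it below -/
import Mathlib

section
/- For every unitary matrix U in U(2) over the complex numbers, there exist a pure unit quaternion μ and real numbers α and φ such that for all (z₁, z₂) ∈ ℂ², Φ(U·(z₁, z₂)) = exp(μ·α/2) · Φ(z₁, z₂) · exp(j·φ), where U·(z₁, z₂) denotes matrix-vector multiplication and exp is the quaternion exponential. -/
/-!
Write `U = e^{iφ} V` with `e^{2iφ} = det U`, so that `V ∈ SU(2)` has the form
`[[a, -b̄], [b, ā]]` with `|a|² + |b|² = 1`. Under `Φ`, such a `V` acts as left multiplication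
by the unit quaternion `p = Φ(a, b)`, while the scalar `e^{iφ}` acts as right multiplication by
`ι(e^{iφ}) = exp(jφ)`, because `ι` is a ring embedding with commutative image. Finally every unit
quaternion is `exp(μθ) = cos θ + μ sin θ` for a pure unit quaternion `μ`.
-/

open Quaternion MeasureTheory

noncomputable section

/-- The imaginary unit `i` of the quaternions. -/
def qi : ℍ[ℝ] := ⟨0, 1, 0, 0⟩

/-- The imaginary unit `j` of the quaternions. -/
def qj : ℍ[ℝ] := ⟨0, 0, 1, 0⟩

/-- The embedding `ι : ℂ → ℍ` sending `a + b·√(−1)` to `a + b·j`. -/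
def iotaC (z : ℂ) : ℍ[ℝ] := ⟨z.re, 0, z.im, 0⟩

/-- The identification `Φ : ℂ² → ℍ`, `Φ(z₁, z₂) = ι(z₁) + i·ι(z₂)`. -/
def PhiMap (z : Fin 2 → ℂ) : ℍ[ℝ] := iotaC (z 0) + qi * iotaC (z 1)

/-- A quaternion is a pure unit quaternion if its real part is `0` and its modulus is `1`. -/
def IsPureUnit (μ : ℍ[ℝ]) : Prop := μ.re = 0 ∧ ‖μ‖ = 1

/-- The quaternion exponential. -/
def qexp (q : ℍ[ℝ]) : ℍ[ℝ] := NormedSpace.exp q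

/-- The Euclidean inner product on `ℍ ≅ ℝ⁴`: `⟨p, q⟩` is the real part of `p·q̄`. -/
def qinner (p q : ℍ[ℝ]) : ℝ := (p * star q).re

open Matrix

section Unitary

open Complex ComplexConjugate

lemma Complex.exp_ofReal_mul_I_mem_unitary (x : ℝ) : exp (x * I) ∈ unitary ℂ := by
  rw [Unitary.mem_iff_star_mul_self, star_def, ← exp_conj, ← exp_add]
  simp

lemma Complex.exp_neg_arg_mul_I_mul_self {d : ℂ} (hd : d ∈ unitary ℂ) :
    exp (-(arg d * I)) * d = 1 := by
  nth_rewrite 2 [← norm_mul_exp_arg_mul_I d]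
  rw [CStarRing.norm_of_mem_unitary hd, ofReal_one, one_mul, ← exp_add, neg_add_cancel, exp_zero]

lemma Matrix.exists_smul_mem_specialUnitaryGroup {n : Type*} [Fintype n] [DecidableEq n]
    {U : Matrix n n ℂ} (hU : U ∈ unitaryGroup n ℂ) :
    ∃ φ : ℝ, ∃ V ∈ specialUnitaryGroup n ℂ, U = exp (φ * I) • V := by
  set φ := arg U.det / Fintype.card n
  have hc : exp (-(φ * I)) ∈ unitary ℂ := by simpa using exp_ofReal_mul_I_mem_unitary (-φ)
  refine ⟨φ, exp (-(φ * I)) • U, mem_specialUnitaryGroup_iff.mpr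
    ⟨Unitary.smul_mem_of_mem hc hU, ?_⟩, ?_⟩
  · rw [det_smul]
    rcases (Fintype.card n).eq_zero_or_pos with hn | hn
    · have := Fintype.card_eq_zero_iff.mp hn
      rw [hn, pow_zero, one_mul, det_isEmpty]
    · have hn' : (Fintype.card n : ℂ) ≠ 0 := by exact_mod_cast hn.ne'
      have hexp : (Fintype.card n : ℂ) * -(φ * I) = -(arg U.det * I) := by
        simp only [φ]; push_cast; field_simp
      rw [← exp_nat_mul, hexp, exp_neg_arg_mul_I_mul_self (det_of_mem_unitary hU)]
  · rw [smul_smul, ← exp_add, add_neg_cancel, exp_zero, one_smul]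

lemma Matrix.sum_normSq_of_mem_unitaryGroup {n : Type*} [Fintype n] [DecidableEq n]
    {U : Matrix n n ℂ} (hU : U ∈ unitaryGroup n ℂ) (j : n) :
    ∑ i, normSq (U i j) = 1 := by
  have h := congrFun (congrFun hU.1 j) j
  simp only [mul_apply, star_apply, star_def, ← normSq_eq_conj_mul_self, one_apply_eq] at h
  exact_mod_cast h

lemma Matrix.eq_of_mem_specialUnitaryGroup_fin_two {V : Matrix (Fin 2) (Fin 2) ℂ}
    (hV : V ∈ specialUnitaryGroup (Fin 2) ℂ) :
    V = !![V 0 0, -conj (V 1 0); V 1 0, conj (V 0 0)] := by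
  obtain ⟨hVu, hdet⟩ := mem_specialUnitaryGroup_iff.mp hV
  have hstar : star V = V.adjugate := by
    calc star V = star V * (V * V.adjugate) := by rw [mul_adjugate, hdet, one_smul, mul_one]
      _ = V.adjugate := by rw [← mul_assoc, hVu.1, one_mul]
  have h00 := congrFun (congrFun hstar 0) 0
  have h01 := congrFun (congrFun hstar 0) 1
  simp only [adjugate_fin_two, star_apply, of_apply, cons_val', cons_val_zero, cons_val_one,
    empty_val', cons_val_fin_one, star_def] at h00 h01
  ext i j
  fin_cases i <;> fin_cases j
  · rfl
  · simp [h01]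
  · rfl
  · simp [h00]

end Unitary

lemma Real.sin_abs_div_abs_mul_self (t : ℝ) : sin |t| / |t| * t = sin t := by
  rcases abs_cases t with ⟨h, -⟩ | ⟨h, -⟩ <;> rw [h]
  · exact div_mul_cancel_of_imp fun ht => by rw [ht, sin_zero]
  · rw [sin_neg, neg_div_neg_eq]
    exact div_mul_cancel_of_imp fun ht => by rw [ht, sin_zero]

lemma Quaternion.norm_eq_one_of_normSq_eq_one {q : ℍ[ℝ]} (h : normSq q = 1) : ‖q‖ = 1 := by
  rwa [← pow_eq_one_iff_of_nonneg (norm_nonneg q) two_ne_zero, sq, ← normSq_eq_norm_mul_self]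

lemma Quaternion.sq_re_add_sq_norm_im (p : ℍ[ℝ]) : p.re ^ 2 + ‖p.im‖ ^ 2 = ‖p‖ ^ 2 := by
  simp only [sq, ← normSq_eq_norm_mul_self, normSq_def', re_im, imI_im, imJ_im, imK_im]
  ring

@[simp] lemma qi_re : qi.re = 0 := rfl
@[simp] lemma qi_imI : qi.imI = 1 := rfl
@[simp] lemma qi_imJ : qi.imJ = 0 := rfl
@[simp] lemma qi_imK : qi.imK = 0 := rfl
@[simp] lemma qj_re : qj.re = 0 := rfl
@[simp] lemma qj_imI : qj.imI = 0 := rfl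
@[simp] lemma qj_imJ : qj.imJ = 1 := rfl
@[simp] lemma qj_imK : qj.imK = 0 := rfl
@[simp] lemma iotaC_re (z : ℂ) : (iotaC z).re = z.re := rfl
@[simp] lemma iotaC_imI (z : ℂ) : (iotaC z).imI = 0 := rfl
@[simp] lemma iotaC_imJ (z : ℂ) : (iotaC z).imJ = z.im := rfl
@[simp] lemma iotaC_imK (z : ℂ) : (iotaC z).imK = 0 := rfl

lemma isPureUnit_qj : IsPureUnit qj :=
  ⟨rfl, norm_eq_one_of_normSq_eq_one (by simp [normSq_def'])⟩

lemma qexp_mul_coe_of_isPureUnit {μ : ℍ[ℝ]} (hμ : IsPureUnit μ) (t : ℝ) :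
    qexp (μ * t) = (Real.cos t : ℍ[ℝ]) + Real.sin t • μ := by
  rw [qexp, mul_coe_eq_smul, exp_of_re_eq_zero _ (by simp [hμ.1]), norm_smul, hμ.2, mul_one,
    Real.norm_eq_abs, Real.cos_abs, smul_smul, Real.sin_abs_div_abs_mul_self]

lemma exists_isPureUnit_norm_smul_eq {q : ℍ[ℝ]} (hq : q.re = 0) :
    ∃ μ, IsPureUnit μ ∧ ‖q‖ • μ = q := by
  rcases eq_or_ne q 0 with rfl | hq0
  · exact ⟨qj, isPureUnit_qj, by simp⟩
  have hn : ‖q‖ ≠ 0 := norm_ne_zero_iff.mpr hq0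
  refine ⟨‖q‖⁻¹ • q, ⟨by simp [hq], ?_⟩, smul_inv_smul₀ hn q⟩
  rw [norm_smul, norm_inv, norm_norm, inv_mul_cancel₀ hn]

lemma exists_isPureUnit_qexp_eq {p : ℍ[ℝ]} (hp : ‖p‖ = 1) :
    ∃ (μ : ℍ[ℝ]) (θ : ℝ), IsPureUnit μ ∧ qexp (μ * θ) = p := by
  have hpyth := p.sq_re_add_sq_norm_im
  rw [hp, one_pow] at hpyth
  have hre : p.re ^ 2 ≤ 1 := by nlinarith [sq_nonneg ‖p.im‖]
  have hsq : 1 - p.re ^ 2 = ‖p.im‖ ^ 2 := by linarith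
  obtain ⟨μ, hμ, hμp⟩ := exists_isPureUnit_norm_smul_eq p.re_im
  refine ⟨μ, Real.arccos p.re, hμ, ?_⟩
  rw [qexp_mul_coe_of_isPureUnit hμ, Real.cos_arccos (by nlinarith) (by nlinarith),
    Real.sin_arccos, hsq, Real.sqrt_sq (norm_nonneg _), hμp, re_add_im]

lemma iotaC_mul (z w : ℂ) : iotaC (z * w) = iotaC z * iotaC w := by
  ext <;> simp

lemma qexp_qj_mul_coe (φ : ℝ) : qexp (qj * φ) = iotaC (Complex.exp (φ * Complex.I)) := by
  rw [qexp_mul_coe_of_isPureUnit isPureUnit_qj]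
  ext <;> simp [Complex.exp_ofReal_mul_I_re, Complex.exp_ofReal_mul_I_im]

lemma PhiMap_eq_mk (z : Fin 2 → ℂ) : PhiMap z = ⟨(z 0).re, (z 1).re, (z 0).im, (z 1).im⟩ := by
  ext <;> simp [PhiMap]

lemma normSq_PhiMap (z : Fin 2 → ℂ) :
    normSq (PhiMap z) = Complex.normSq (z 0) + Complex.normSq (z 1) := by
  rw [normSq_def', PhiMap_eq_mk, Complex.normSq_apply, Complex.normSq_apply]
  ring

lemma PhiMap_smul (c : ℂ) (z : Fin 2 → ℂ) : PhiMap (c • z) = PhiMap z * iotaC c := by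
  simp only [PhiMap, Pi.smul_apply, smul_eq_mul, add_mul, mul_assoc, ← iotaC_mul, mul_comm c]

lemma PhiMap_mulVec_of_mem_specialUnitaryGroup {V : Matrix (Fin 2) (Fin 2) ℂ}
    (hV : V ∈ specialUnitaryGroup (Fin 2) ℂ) (z : Fin 2 → ℂ) :
    PhiMap (V *ᵥ z) = PhiMap ![V 0 0, V 1 0] * PhiMap z := by
  conv_lhs => rw [eq_of_mem_specialUnitaryGroup_fin_two hV]
  ext <;> simp [PhiMap, mulVec, dotProduct, Fin.sum_univ_two] <;> ring

/-- Every `U ∈ U(2)` acts on `ℍ ≅ ℂ²` as `X ↦ exp(μ·α/2)·X·exp(j·φ)` for some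
pure unit quaternion `μ` and reals `α`, `φ`. -/
theorem unitary_to_quaternion (U : Matrix (Fin 2) (Fin 2) ℂ)
    (hU : U ∈ Matrix.unitaryGroup (Fin 2) ℂ) :
    ∃ (μ : ℍ[ℝ]) (α φ : ℝ), IsPureUnit μ ∧
      ∀ z : Fin 2 → ℂ,
        PhiMap (U.mulVec z) =
          qexp (μ * ((α / 2 : ℝ) : ℍ[ℝ])) * PhiMap z * qexp (qj * ((φ : ℝ) : ℍ[ℝ])) := by
  obtain ⟨φ, V, hV, rfl⟩ := exists_smul_mem_specialUnitaryGroup hU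
  have hp : ‖PhiMap ![V 0 0, V 1 0]‖ = 1 := by
    refine norm_eq_one_of_normSq_eq_one ?_
    simpa [normSq_PhiMap, Fin.sum_univ_two] using
      sum_normSq_of_mem_unitaryGroup (specialUnitaryGroup_le_unitaryGroup hV) 0
  obtain ⟨μ, θ, hμ, hθ⟩ := exists_isPureUnit_qexp_eq hp
  refine ⟨μ, 2 * θ, φ, hμ, fun z => ?_⟩
  rw [mul_div_cancel_left₀ θ two_ne_zero, hθ, qexp_qj_mul_coe, smul_mulVec, PhiMap_smul,
    PhiMap_mulVec_of_mem_specialUnitaryGroup hV]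
end
end

section
/- For every Hermitian positive semidefinite 2×2 complex matrix H, there exist a pure unit quaternion μ, a real number K ≥ 0, and a real number η ∈ [0, 1] such that for all (z₁, z₂) ∈ ℂ², Φ(H·(z₁, z₂)) = K·(Φ(z₁, z₂) − η·μ·Φ(z₁, z₂)·j). -/
open Quaternion MeasureTheory
open scoped ComplexOrder

noncomputable section

/-!
Write `H = [[a, b], [b̄, d]]`. A direct computation gives `Φ(H z) = K Φ(z) + q Φ(z) j` with
`K = (a + d) / 2` and the pure quaternion `q = -(Im b) i + ((d - a) / 2) j - (Re b) k`.
Positive semidefiniteness gives `a, d ≥ 0` and `|b|² ≤ a d`, hence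
`|q|² = |b|² + ((d - a) / 2)² ≤ K²`, so `q = -K η μ` with `μ = -q / |q|` and `η = |q| / K ∈ [0, 1]`.
-/

theorem Matrix.IsHermitian.im_apply_self {n : Type*} {H : Matrix n n ℂ} (hH : H.IsHermitian)
    (i : n) : (H i i).im = 0 :=
  Complex.conj_eq_iff_im.mp (hH.apply i i)

def hermitianQuat (H : Matrix (Fin 2) (Fin 2) ℂ) : ℍ[ℝ] :=
  ⟨0, -(H 0 1).im, ((H 1 1).re - (H 0 0).re) / 2, -(H 0 1).re⟩

theorem PhiMap_mulVec_of_isHermitian {H : Matrix (Fin 2) (Fin 2) ℂ} (hH : H.IsHermitian)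
    (z : Fin 2 → ℂ) :
    PhiMap (H.mulVec z) =
      (((H 0 0).re + (H 1 1).re) / 2 : ℝ) * PhiMap z + hermitianQuat H * PhiMap z * qj := by
  have h10 : H 1 0 = starRingEnd ℂ (H 0 1) := (hH.apply 1 0).symm
  ext <;>
    simp only [PhiMap, Quaternion.re_add, Quaternion.imI_add, Quaternion.imJ_add,
      Quaternion.imK_add, Quaternion.re_mul, Quaternion.imI_mul, Quaternion.imJ_mul,
      Quaternion.imK_mul, Quaternion.re_coe, Quaternion.imI_coe, Quaternion.imJ_coe,
      Quaternion.imK_coe] <;>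
    simp [iotaC, qi, qj, hermitianQuat, Matrix.mulVec, dotProduct, hH.im_apply_self, h10,
      Complex.mul_re, Complex.mul_im] <;>
    ring

theorem norm_hermitianQuat_le {H : Matrix (Fin 2) (Fin 2) ℂ} (hH : H.PosSemidef) :
    ‖hermitianQuat H‖ ≤ ((H 0 0).re + (H 1 1).re) / 2 := by
  have ha : 0 ≤ (H 0 0).re := (Complex.nonneg_iff.mp hH.diag_nonneg).1
  have hd : 0 ≤ (H 1 1).re := (Complex.nonneg_iff.mp hH.diag_nonneg).1
  have hdet : (H 0 1).re ^ 2 + (H 0 1).im ^ 2 ≤ (H 0 0).re * (H 1 1).re := by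
    have h10 : H 1 0 = starRingEnd ℂ (H 0 1) := (hH.1.apply 1 0).symm
    have := (Complex.nonneg_iff.mp hH.det_nonneg).1
    simp only [Matrix.det_fin_two, h10, Complex.sub_re, Complex.mul_re, Complex.conj_re,
      Complex.conj_im, hH.1.im_apply_self] at this
    nlinarith
  refine le_of_pow_le_pow_left₀ two_ne_zero (by positivity) ?_
  rw [sq, ← Quaternion.normSq_eq_norm_mul_self, Quaternion.normSq_def']
  simp only [hermitianQuat]
  nlinarith

theorem norm_qi : ‖qi‖ = 1 := by
  rw [norm_eq_sqrt_real_inner, Quaternion.inner_self, Quaternion.normSq_def']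
  simp [qi]

theorem exists_isPureUnit_of_norm_le {q : ℍ[ℝ]} (hq : q.re = 0) {K : ℝ} (hK : ‖q‖ ≤ K) :
    ∃ (μ : ℍ[ℝ]) (η : ℝ), IsPureUnit μ ∧ η ∈ Set.Icc (0 : ℝ) 1 ∧ q = -((K : ℍ[ℝ]) * η * μ) := by
  rcases eq_or_ne q 0 with rfl | hq0
  · exact ⟨qi, 0, ⟨rfl, norm_qi⟩, ⟨le_rfl, zero_le_one⟩, by simp⟩
  have hq_pos : 0 < ‖q‖ := norm_pos_iff.mpr hq0
  have hK_pos : 0 < K := hq_pos.trans_le hK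
  refine ⟨(-‖q‖⁻¹) • q, ‖q‖ / K, ⟨?_, ?_⟩, ⟨by positivity, (div_le_one hK_pos).mpr hK⟩, ?_⟩
  · simp [hq]
  · rw [norm_smul, norm_neg, norm_inv, norm_norm, inv_mul_cancel₀ hq_pos.ne']
  · rw [← Quaternion.coe_mul, Quaternion.coe_mul_eq_smul, smul_smul, ← neg_smul,
      mul_div_cancel₀ _ hK_pos.ne', mul_neg, mul_inv_cancel₀ hq_pos.ne', neg_neg, one_smul]

/-- Every Hermitian positive semidefinite `H` acts on `ℍ ≅ ℂ²` as
`X ↦ K·(X − η·μ·X·j)` for some pure unit quaternion `μ`, `K ≥ 0` and `η ∈ [0,1]`. -/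
theorem hermitian_to_quaternion (H : Matrix (Fin 2) (Fin 2) ℂ) (hH : H.PosSemidef) :
    ∃ (μ : ℍ[ℝ]) (K η : ℝ), IsPureUnit μ ∧ 0 ≤ K ∧ η ∈ Set.Icc (0 : ℝ) 1 ∧
      ∀ z : Fin 2 → ℂ,
        PhiMap (H.mulVec z) =
          (K : ℍ[ℝ]) * (PhiMap z - (η : ℍ[ℝ]) * (μ * PhiMap z * qj)) := by
  have hq := norm_hermitianQuat_le hH
  obtain ⟨μ, η, hμ, hη, hq_eq⟩ := exists_isPureUnit_of_norm_le (q := hermitianQuat H) rfl hq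
  refine ⟨μ, _, η, hμ, (norm_nonneg _).trans hq, hη, fun z => ?_⟩
  rw [PhiMap_mulVec_of_isHermitian hH.1, hq_eq]
  noncomm_ring
end
end

section
/- Let X be a quaternion, μ a pure unit quaternion, and α, φ real numbers, and set Y = exp(μ·α/2)·X·exp(j·φ). Then |Y|² + Y·j·Ȳ = exp(μ·α/2)·(|X|² + X·j·X̄)·exp(−μ·α/2); that is, the quaternion spectral density of the output of a unitary filter is the conjugation by exp(μ·α/2) of the quaternion spectral density of the input. -/
/-!
Since `|X|² = X·X̄`, the spectral density of `X` is `X·(1 + j)·X̄`. The factors `exp(μ·α/2)` and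
`exp(j·φ)` are exponentials of skew-adjoint quaternions, hence unitary, and `exp(j·φ)` commutes
with `1 + j`; so it cancels in `Y·(1 + j)·Ȳ`, leaving conjugation by `exp(μ·α/2)`, whose adjoint
is `exp(-μ·α/2)`.
-/

open Quaternion MeasureTheory

noncomputable section

theorem mul_mul_star_mul_of_unitary {R : Type*} [Monoid R] [StarMul R] {c V : R}
    (hV : V ∈ unitary R) (hcV : Commute c V) (U x : R) :
    U * x * V * c * star (U * x * V) = U * (x * c * star x) * star U := by
  simp only [star_mul, mul_assoc, ← hcV.eq]
  rw [← mul_assoc V, Unitary.mul_star_self_of_mem hV, one_mul]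

namespace Quaternion

variable {R : Type*} [CommRing R]

theorem coe_normSq_add_mul_mul_star (X q : ℍ[R]) :
    ((normSq X : R) : ℍ[R]) + X * q * star X = X * (1 + q) * star X := by
  rw [← self_mul_star X, mul_add, mul_one, add_mul]

theorem mul_coe_mem_skewAdjoint [NoZeroDivisors R] [CharZero R] {μ : ℍ[R]} (hμ : μ.re = 0)
    (r : R) : μ * (r : ℍ[R]) ∈ skewAdjoint ℍ[R] := by
  rw [skewAdjoint.mem_iff, star_eq_neg]
  simp [hμ]

end Quaternion

theorem star_qexp_of_mem_skewAdjoint {a : ℍ[ℝ]} (ha : a ∈ skewAdjoint ℍ[ℝ]) :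
    star (qexp a) = qexp (-a) := by
  rw [qexp, NormedSpace.star_exp, skewAdjoint.mem_iff.mp ha, qexp]

theorem qexp_mem_unitary_of_mem_skewAdjoint {a : ℍ[ℝ]} (ha : a ∈ skewAdjoint ℍ[ℝ]) :
    qexp a ∈ unitary ℍ[ℝ] :=
  let +nondep : NormedAlgebra ℚ ℍ[ℝ] := .restrictScalars ℚ ℝ ℍ[ℝ]
  NormedSpace.exp_mem_unitary_of_mem_skewAdjoint ha

theorem commute_qexp_mul_coe (q : ℍ[ℝ]) (r : ℝ) : Commute q (qexp (q * (r : ℍ[ℝ]))) :=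
  ((Commute.refl q).mul_right (Quaternion.coe_commute r q).symm).exp_right

/-- The quaternion spectral density of the output of a unitary filter is the conjugation by
`exp(μ·α/2)` of the quaternion spectral density of the input. -/
theorem unitary_filter_spectral_density (X μ : ℍ[ℝ]) (hμ : IsPureUnit μ) (α φ : ℝ)
    (Y : ℍ[ℝ]) (hY : Y = qexp (μ * ((α / 2 : ℝ) : ℍ[ℝ])) * X * qexp (qj * ((φ : ℝ) : ℍ[ℝ]))) :
    ((Quaternion.normSq Y : ℝ) : ℍ[ℝ]) + Y * qj * star Y =
      qexp (μ * ((α / 2 : ℝ) : ℍ[ℝ]))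
        * (((Quaternion.normSq X : ℝ) : ℍ[ℝ]) + X * qj * star X)
        * qexp (-(μ * ((α / 2 : ℝ) : ℍ[ℝ]))) := by
  have hrot : μ * ((α / 2 : ℝ) : ℍ[ℝ]) ∈ skewAdjoint ℍ[ℝ] :=
    Quaternion.mul_coe_mem_skewAdjoint hμ.1 _
  have hphase : qexp (qj * (φ : ℍ[ℝ])) ∈ unitary ℍ[ℝ] :=
    qexp_mem_unitary_of_mem_skewAdjoint (Quaternion.mul_coe_mem_skewAdjoint rfl φ)
  have hcomm : Commute (1 + qj) (qexp (qj * (φ : ℍ[ℝ]))) :=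
    (Commute.one_left _).add_left (commute_qexp_mul_coe qj φ)
  rw [hY, Quaternion.coe_normSq_add_mul_mul_star, Quaternion.coe_normSq_add_mul_mul_star,
    mul_mul_star_mul_of_unitary hphase hcomm, star_qexp_of_mem_skewAdjoint hrot]
end
end

section
/- Let X be a quaternion and μ a pure unit quaternion, and set Y = X − μ·X·j (the polarizer with diattenuation axis μ, i.e. the Hermitian filter with polarizing power η = 1 and unit homogeneous gain). Then μ·Y = Y·j and Y·j·Ȳ = |Y|²·μ; that is, the output of a polarizer is fully polarized with polarization axis μ, regardless of the input. -/
open Quaternion MeasureTheory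

noncomputable section

theorem IsPureUnit.sq_eq_neg_one {μ : ℍ[ℝ]} (hμ : IsPureUnit μ) : μ ^ 2 = -1 := by
  rw [Quaternion.sq_eq_neg_normSq.mpr hμ.1, Quaternion.normSq_eq_norm_mul_self, hμ.2, mul_one,
    Quaternion.coe_one]

theorem qj_sq : qj ^ 2 = -1 := by
  rw [Quaternion.sq_eq_neg_normSq.mpr rfl, Quaternion.normSq_def']
  norm_num [qj]

theorem mul_sub_mul_mul_eq_sub_mul_mul_mul {R : Type*} [Ring R] {μ ν : R}
    (hμ : μ ^ 2 = -1) (hν : ν ^ 2 = -1) (X : R) :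
    μ * (X - μ * X * ν) = (X - μ * X * ν) * ν := by
  rw [sq] at hμ hν
  calc μ * (X - μ * X * ν) = μ * X - μ * μ * X * ν := by noncomm_ring
    _ = X * ν - μ * X * (ν * ν) := by rw [hμ, hν]; noncomm_ring
    _ = (X - μ * X * ν) * ν := by noncomm_ring

theorem Quaternion.mul_mul_star_eq_normSq_mul {R : Type*} [CommRing R] {μ ν Y : ℍ[R]}
    (h : μ * Y = Y * ν) : Y * ν * star Y = ((normSq Y : R) : ℍ[R]) * μ := by
  rw [← h, mul_assoc, self_mul_star, coe_commutes]

/-- The output of a polarizer with diattenuation axis `μ` is fully polarized with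
polarization axis `μ`, regardless of the input. -/
theorem polarizer_fully_polarized (X μ : ℍ[ℝ]) (hμ : IsPureUnit μ)
    (Y : ℍ[ℝ]) (hY : Y = X - μ * X * qj) :
    μ * Y = Y * qj ∧ Y * qj * star Y = ((Quaternion.normSq Y : ℝ) : ℍ[ℝ]) * μ := by
  have hintertwine : μ * Y = Y * qj :=
    hY ▸ mul_sub_mul_mul_eq_sub_mul_mul_mul hμ.sq_eq_neg_one qj_sq X
  exact ⟨hintertwine, Quaternion.mul_mul_star_eq_normSq_mul hintertwine⟩
end
end

section
/- Let X : ℝ → ℍ satisfy X(−ν) = −i·X(ν)·i for all ν, let μ : ℝ → ℍ take pure unit quaternion values with μ(−ν) = −i·μ(ν)·i for all ν, and let α, φ : ℝ → ℝ satisfy α(−ν) = α(ν) and φ(−ν) = −φ(ν) for all ν. Define Y(ν) = exp(μ(ν)·α(ν)/2)·X(ν)·exp(j·φ(ν)). Then Y(−ν) = −i·Y(ν)·i for all ν; that is, a unitary filter with these symmetry conditions preserves the i-Hermitian symmetry of the spectrum. -/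
open Quaternion MeasureTheory

noncomputable section

/-!
The map `q ↦ -(i q i)` is conjugation by the unit `i` (as `i⁻¹ = -i`), an `ℝ`-algebra automorphism
of `ℍ` that, being continuous, commutes with `exp`. Applying it to `Y ν` factor by factor, the
symmetries of `μ` and `X` turn the first two factors into their values at `-ν`, real scalars are
fixed, and the oddness of `φ` is absorbed by the conjugate of `j`, which is `-j`.
-/

lemma qi_mul_qi : qi * qi = -1 := by
  ext <;> simp [Quaternion.re_mul, Quaternion.imI_mul, Quaternion.imJ_mul, Quaternion.imK_mul] <;>
    simp [qi]

lemma qi_mul_qj_mul_qi : qi * qj * qi = qj := by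
  ext <;> simp [Quaternion.re_mul, Quaternion.imI_mul, Quaternion.imJ_mul, Quaternion.imK_mul] <;>
    simp [qi, qj]

def qiUnit : ℍ[ℝ]ˣ :=
  ⟨qi, -qi, by rw [mul_neg, qi_mul_qi, neg_neg], by rw [neg_mul, qi_mul_qi, neg_neg]⟩

def conjQi : ℍ[ℝ] ≃ₐ[ℝ] ℍ[ℝ] := MulSemiringAction.toAlgEquiv ℝ ℍ[ℝ] (ConjAct.toConjAct qiUnit)

lemma conjQi_apply (q : ℍ[ℝ]) : conjQi q = -(qi * q * qi) := by
  show qi * q * -qi = _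
  rw [mul_neg]

lemma conjQi_coe (r : ℝ) : conjQi r = r := conjQi.commutes r

lemma conjQi_qj : conjQi qj = -qj := by rw [conjQi_apply, qi_mul_qj_mul_qi]

lemma conjQi_qexp (q : ℍ[ℝ]) : conjQi (qexp q) = qexp (conjQi q) := by
  let _ : NormedAlgebra ℚ ℍ[ℝ] := NormedAlgebra.restrictScalars ℚ ℝ ℍ[ℝ]
  exact (NormedSpace.exp_smul (ConjAct.toConjAct qiUnit) q).symm

theorem unitary_filter_preserves_symmetry_general (X μ : ℝ → ℍ[ℝ]) (α φ : ℝ → ℝ)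
    (hX : ∀ ν, X (-ν) = -(qi * X ν * qi))
    (hμs : ∀ ν, μ (-ν) = -(qi * μ ν * qi))
    (hα : ∀ ν, α (-ν) = α ν) (hφ : ∀ ν, φ (-ν) = -φ ν)
    (Y : ℝ → ℍ[ℝ])
    (hY : ∀ ν, Y ν = qexp (μ ν * ((α ν / 2 : ℝ) : ℍ[ℝ])) * X ν
      * qexp (qj * ((φ ν : ℝ) : ℍ[ℝ]))) :
    ∀ ν, Y (-ν) = -(qi * Y ν * qi) := by
  intro ν
  simp only [← conjQi_apply] at hX hμs ⊢
  rw [hY, hY, hX, hμs, hα, hφ, map_mul, map_mul, conjQi_qexp, conjQi_qexp, map_mul, map_mul,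
    conjQi_coe, conjQi_coe, conjQi_qj, Quaternion.coe_neg, mul_neg, neg_mul]

/-- A unitary filter with the stated symmetry conditions preserves the i-Hermitian symmetry
of the spectrum. -/
theorem unitary_filter_preserves_symmetry (X μ : ℝ → ℍ[ℝ]) (α φ : ℝ → ℝ)
    (hX : ∀ ν, X (-ν) = -(qi * X ν * qi))
    (hμ : ∀ ν, IsPureUnit (μ ν))
    (hμs : ∀ ν, μ (-ν) = -(qi * μ ν * qi))
    (hα : ∀ ν, α (-ν) = α ν) (hφ : ∀ ν, φ (-ν) = -φ ν)
    (Y : ℝ → ℍ[ℝ])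
    (hY : ∀ ν, Y ν = qexp (μ ν * ((α ν / 2 : ℝ) : ℍ[ℝ])) * X ν
      * qexp (qj * ((φ ν : ℝ) : ℍ[ℝ]))) :
    ∀ ν, Y (-ν) = -(qi * Y ν * qi) :=
  unitary_filter_preserves_symmetry_general X μ α φ hX hμs hα hφ Y hY
end
end

section
/- Let Y be a quaternion, μ a pure unit quaternion, S₀ > 0, σ² > 0 real, and Φ ∈ [0, 1]; set α = S₀/σ², Φy = α·Φ/(1 + α), and S₀y = S₀ + σ². Then (S₀/((1 − Φy²)·S₀y))·[(Y + Φy·μ·Y·j) − Φ·μ·(Y + Φy·μ·Y·j)·j] = ((α + α²·(1 − Φ²))/(1 + 2α + α²·(1 − Φ²)))·(Y − (Φ/(1 + α·(1 − Φ²)))·μ·Y·j). That is, composing the Hermitian filters P⁻¹yy and Pxx arising in Wiener denoising of a signal with degree of polarization Φ, polarization axis μ and power S₀ observed in unpolarized white noise of variance σ² yields the stated closed-form Hermitian filter. -/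
open Quaternion MeasureTheory

noncomputable section

/-! Since `μ² = j² = -1`, the ℝ-linear map `J Y = μ·Y·j` is an involution, so real filters
`a + b·J` compose like split-complex numbers: `(1 - Φ·J)(1 + Φy·J) = (1 - Φ·Φy) + (Φy - Φ)·J`.
Writing `S₀ = α·σ²` and `S₀y = (1 + α)·σ²`, the gain is `α(1 + α)/D` with
`D = (1 + α)²(1 - Φy²) = 1 + 2α + α²(1 - Φ²)`, and both coefficients match by field arithmetic. -/

theorem IsPureUnit.mul_self {μ : ℍ[ℝ]} (hμ : IsPureUnit μ) : μ * μ = -1 := by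
  rw [← sq, Quaternion.sq_eq_neg_normSq.2 hμ.1, Quaternion.normSq_eq_norm_mul_self, hμ.2]
  simp

theorem qj_mul_qj : qj * qj = -1 := by
  ext <;> simp only [Quaternion.re_mul, Quaternion.imI_mul, Quaternion.imJ_mul, Quaternion.imK_mul] <;>
    simp [qj]

section Sandwich

variable {R : Type*} [Ring R] {μ j : R}

theorem mul_mul_mul_mul_of_mul_self_eq_neg_one (hμ : μ * μ = -1) (hj : j * j = -1) (Y : R) :
    μ * (μ * Y * j) * j = Y := by
  calc μ * (μ * Y * j) * j = (μ * μ) * Y * (j * j) := by noncomm_ring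
    _ = Y := by rw [hμ, hj]; noncomm_ring

theorem add_smul_sandwich_sub_smul_sandwich [Algebra ℝ R] (hμ : μ * μ = -1) (hj : j * j = -1)
    (Y : R) (a b : ℝ) :
    (Y + b • (μ * Y * j)) - a • (μ * (Y + b • (μ * Y * j)) * j) =
      (1 - a * b) • Y + (b - a) • (μ * Y * j) := by
  rw [mul_add, add_mul, mul_smul_comm, smul_mul_assoc,
    mul_mul_mul_mul_of_mul_self_eq_neg_one hμ hj]
  module

end Sandwich

theorem wiener_denominator_pos {α Φ : ℝ} (hα : 0 ≤ α) (hΦ : Φ ^ 2 ≤ 1) :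
    0 < 1 + 2 * α + α ^ 2 * (1 - Φ ^ 2) := by
  nlinarith [mul_nonneg (sq_nonneg α) (sub_nonneg.2 hΦ)]

theorem wiener_gain_eq {α σsq Φ : ℝ} (hσ : σsq ≠ 0) (hα : 0 ≤ α) (hΦ : Φ ^ 2 ≤ 1) :
    α * σsq / ((1 - (α * Φ / (1 + α)) ^ 2) * (α * σsq + σsq)) =
      α * (1 + α) / (1 + 2 * α + α ^ 2 * (1 - Φ ^ 2)) := by
  have h1α : 0 < 1 + α := by linarith
  have hD := wiener_denominator_pos hα hΦ
  have hvar : 1 - (α * Φ / (1 + α)) ^ 2 = (1 + 2 * α + α ^ 2 * (1 - Φ ^ 2)) / (1 + α) ^ 2 := by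
    field_simp
    ring
  rw [hvar]
  field_simp
  ring

/-- Closed-form Hermitian filter arising from composing the Hermitian filters `P⁻¹yy`
and `Pxx` in Wiener denoising with unpolarized white noise. -/
theorem wiener_denoising_closed_form (Y μ : ℍ[ℝ]) (hμ : IsPureUnit μ)
    (S₀ σsq : ℝ) (hS₀ : 0 < S₀) (hσ : 0 < σsq)
    (Φ : ℝ) (hΦ : Φ ∈ Set.Icc (0 : ℝ) 1)
    (α Φy S₀y : ℝ) (hα : α = S₀ / σsq) (hΦy : Φy = α * Φ / (1 + α))
    (hS₀y : S₀y = S₀ + σsq) :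
    ((S₀ / ((1 - Φy ^ 2) * S₀y) : ℝ) : ℍ[ℝ]) *
        ((Y + (Φy : ℍ[ℝ]) * (μ * Y * qj))
          - (Φ : ℍ[ℝ]) * (μ * (Y + (Φy : ℍ[ℝ]) * (μ * Y * qj)) * qj)) =
      (((α + α ^ 2 * (1 - Φ ^ 2)) / (1 + 2 * α + α ^ 2 * (1 - Φ ^ 2)) : ℝ) : ℍ[ℝ]) *
        (Y - ((Φ / (1 + α * (1 - Φ ^ 2)) : ℝ) : ℍ[ℝ]) * (μ * Y * qj)) := by
  have hα0 : 0 < α := hα ▸ div_pos hS₀ hσ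
  have hΦ2 : Φ ^ 2 ≤ 1 := by nlinarith [hΦ.1, hΦ.2]
  obtain rfl : S₀ = α * σsq := by rw [hα, div_mul_cancel₀ _ hσ.ne']
  subst hΦy hS₀y
  simp only [Quaternion.coe_mul_eq_smul]
  rw [add_smul_sandwich_sub_smul_sandwich hμ.mul_self qj_mul_qj,
    wiener_gain_eq hσ.ne' hα0.le hΦ2]
  have h1α : 0 < 1 + α := by linarith
  have hD := wiener_denominator_pos hα0.le hΦ2
  have hE : 0 < 1 + α * (1 - Φ ^ 2) := by nlinarith [mul_nonneg hα0.le (sub_nonneg.2 hΦ2)]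
  match_scalars <;> field_simp <;> ring
end
end

section
/- Let (Ω, P) be a probability space and X : Ω → ℍ a random quaternion with E[|X|²] = S₀ and E[X·j·X̄] = Φ·S₀·μ, where S₀ ≥ 0, Φ ∈ [0, 1] and μ is a pure unit quaternion, and all the relevant integrability conditions hold. Define Xₐ = (1/2)·(X − μ·X·j) and X_b = (1/2)·(X + μ·X·j) pointwise, so that X = Xₐ + X_b. Then: (1) E[|Xₐ|²] + E[Xₐ·j·X̄ₐ] = (S₀/2)·(1 + Φ)·(1 + μ); (2) E[|X_b|²] + E[X_b·j·X̄_b] = (S₀/2)·(1 − Φ)·(1 − μ); (3) E[Xₐ·X̄_b] = 0 and E[Xₐ·j·X̄_b] = 0 (the two components are uncorrelated). That is, the polarizer decomposition with gain K = 1/2 splits the signal into two uncorrelated fully polarized components with orthogonal (antipodal) polarization axes ±μ and spectral densities (S₀/2)(1 ± Φ)(1 ± μ). -/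
open Quaternion MeasureTheory

noncomputable section

theorem star_qj : star qj = -qj := Quaternion.star_eq_neg.mpr rfl

theorem IsPureUnit.star_eq_neg {μ : ℍ[ℝ]} (hμ : IsPureUnit μ) : star μ = -μ :=
  Quaternion.star_eq_neg.mpr hμ.1

theorem Quaternion.coe_eq_smul_one (r : ℝ) : (r : ℍ[ℝ]) = r • (1 : ℍ[ℝ]) := by
  rw [← Quaternion.coe_mul_eq_smul, mul_one]

/-- `Xa = polarizer μ (1/2) (-1/2) X` and `Xb = polarizer μ (1/2) (1/2) X`. -/
def polarizer (μ : ℍ[ℝ]) (a b : ℝ) (x : ℍ[ℝ]) : ℍ[ℝ] := a • x + b • (μ * x * qj)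

theorem polarizer_mul_mul_star (μ x c : ℍ[ℝ]) (a b a' b' : ℝ) (hc : Commute c qj) :
    polarizer μ a b x * c * star (polarizer μ a' b' x) =
      (a * a') • (x * c * star x) - (a * b') • (x * (c * qj) * star x * star μ) +
        (b * a') • (μ * (x * (c * qj) * star x)) + (b * b') • (μ * (x * c * star x) * star μ) := by
  have hjj (r : ℍ[ℝ]) : qj * (qj * r) = -r := by rw [← mul_assoc, qj_mul_qj, neg_one_mul]
  simp only [polarizer, star_add, Quaternion.star_smul, star_mul, star_qj, add_mul, mul_add,
    sub_eq_add_neg, smul_mul_assoc, mul_smul_comm, neg_mul, mul_neg, mul_assoc,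
    hc.symm.left_comm, hjj]
  module

section

variable {Ω : Type*} [MeasurableSpace Ω] {P : Measure Ω}

theorem integral_const_mul_mul_const_of_integrable {A : Type*} [NormedRing A] [NormedAlgebra ℝ A]
    {f : Ω → A} (hf : Integrable f P) (p q : A) :
    ∫ ω, p * f ω * q ∂P = p * (∫ ω, f ω ∂P) * q := by
  rw [integral_mul_const_of_integrable (hf.const_mul p), integral_const_mul_of_integrable hf]

theorem Quaternion.integral_mul_star (Y : Ω → ℍ[ℝ]) :
    ∫ ω, Y ω * star (Y ω) ∂P = ((∫ ω, Quaternion.normSq (Y ω) ∂P : ℝ) : ℍ[ℝ]) := by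
  simp only [Quaternion.self_mul_star, Quaternion.coe_eq_smul_one, integral_smul_const]

variable {X : Ω → ℍ[ℝ]}

theorem integral_polarizer_mul_mul_star
    (hX : ∀ c, Integrable (fun ω => X ω * c * star (X ω)) P) (μ c : ℍ[ℝ]) (a b a' b' : ℝ)
    (hc : Commute c qj) :
    ∫ ω, polarizer μ a b (X ω) * c * star (polarizer μ a' b' (X ω)) ∂P =
      (a * a') • ∫ ω, X ω * c * star (X ω) ∂P -
        (a * b') • ((∫ ω, X ω * (c * qj) * star (X ω) ∂P) * star μ) +
        (b * a') • (μ * ∫ ω, X ω * (c * qj) * star (X ω) ∂P) +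
        (b * b') • (μ * (∫ ω, X ω * c * star (X ω) ∂P) * star μ) := by
  have h₁ := hX c
  have h₂ := hX (c * qj)
  simp_rw [polarizer_mul_mul_star _ _ _ _ _ _ _ hc]
  rw [integral_add (by fun_prop) (by fun_prop), integral_add (by fun_prop) (by fun_prop),
    integral_sub (by fun_prop) (by fun_prop), integral_smul, integral_smul, integral_smul,
    integral_smul, integral_mul_const_of_integrable h₂, integral_const_mul_of_integrable h₂,
    integral_const_mul_mul_const_of_integrable h₁]

variable {S Φ : ℝ} {μ : ℍ[ℝ]}

theorem integral_polarizer_mul_star (hμ : IsPureUnit μ)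
    (hX : ∀ c, Integrable (fun ω => X ω * c * star (X ω)) P)
    (hS : ∫ ω, Quaternion.normSq (X ω) ∂P = S)
    (hΦ : ∫ ω, X ω * qj * star (X ω) ∂P = ((Φ * S : ℝ) : ℍ[ℝ]) * μ) (a b a' b' : ℝ) :
    ∫ ω, polarizer μ a b (X ω) * star (polarizer μ a' b' (X ω)) ∂P =
      (((a * a' + b * b') - (a * b' + b * a') * Φ) * S : ℝ) := by
  have h := integral_polarizer_mul_mul_star hX μ 1 a b a' b' (Commute.one_left qj)
  simp only [mul_one, one_mul] at h
  rw [h, Quaternion.integral_mul_star, hS, hΦ, hμ.star_eq_neg]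
  simp only [Quaternion.coe_eq_smul_one, smul_mul_assoc, mul_smul_comm, one_mul, mul_one, mul_neg,
    hμ.mul_self]
  module

theorem integral_polarizer_mul_qj_mul_star (hμ : IsPureUnit μ)
    (hX : ∀ c, Integrable (fun ω => X ω * c * star (X ω)) P)
    (hS : ∫ ω, Quaternion.normSq (X ω) ∂P = S)
    (hΦ : ∫ ω, X ω * qj * star (X ω) ∂P = ((Φ * S : ℝ) : ℍ[ℝ]) * μ) (a b a' b' : ℝ) :
    ∫ ω, polarizer μ a b (X ω) * qj * star (polarizer μ a' b' (X ω)) ∂P =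
      (((a * a' + b * b') * Φ - (a * b' + b * a')) * S : ℝ) * μ := by
  rw [integral_polarizer_mul_mul_star hX μ qj a b a' b' (Commute.refl qj), qj_mul_qj]
  simp only [mul_neg_one, neg_mul, integral_neg, Quaternion.integral_mul_star, hS, hΦ,
    hμ.star_eq_neg]
  simp only [Quaternion.coe_eq_smul_one, smul_mul_assoc, mul_smul_comm, one_mul, mul_one, neg_mul,
    mul_neg, hμ.mul_self]
  module

end

theorem polarizer_decomposition_general {Ω : Type*} [MeasurableSpace Ω]
    (P : Measure Ω) (X : Ω → ℍ[ℝ])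
    (S₀ Φ : ℝ)
    (μ : ℍ[ℝ]) (hμ : IsPureUnit μ)
    (hint₂ : ∀ p q : ℍ[ℝ], Integrable (fun ω => p * X ω * q * star (X ω)) P)
    (hX₁ : ∫ ω, Quaternion.normSq (X ω) ∂P = S₀)
    (hX₂ : ∫ ω, X ω * qj * star (X ω) ∂P = ((Φ * S₀ : ℝ) : ℍ[ℝ]) * μ)
    (Xa Xb : Ω → ℍ[ℝ])
    (hXa : ∀ ω, Xa ω = ((1 / 2 : ℝ) : ℍ[ℝ]) * (X ω - μ * X ω * qj))
    (hXb : ∀ ω, Xb ω = ((1 / 2 : ℝ) : ℍ[ℝ]) * (X ω + μ * X ω * qj)) :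
    (∀ ω, X ω = Xa ω + Xb ω) ∧
    ((↑(∫ ω, Quaternion.normSq (Xa ω) ∂P) + ∫ ω, Xa ω * qj * star (Xa ω) ∂P : ℍ[ℝ]) =
      ((S₀ / 2 * (1 + Φ) : ℝ) : ℍ[ℝ]) * (1 + μ)) ∧
    ((↑(∫ ω, Quaternion.normSq (Xb ω) ∂P) + ∫ ω, Xb ω * qj * star (Xb ω) ∂P : ℍ[ℝ]) =
      ((S₀ / 2 * (1 - Φ) : ℝ) : ℍ[ℝ]) * (1 - μ)) ∧
    (∫ ω, Xa ω * star (Xb ω) ∂P = 0 ∧ ∫ ω, Xa ω * qj * star (Xb ω) ∂P = 0) := by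
  have hX : ∀ c, Integrable (fun ω => X ω * c * star (X ω)) P := fun c => by
    simpa only [one_mul] using hint₂ 1 c
  have hXa' : Xa = fun ω => polarizer μ (1 / 2) (-(1 / 2)) (X ω) := by
    funext ω
    rw [hXa, Quaternion.coe_mul_eq_smul, polarizer]
    module
  have hXb' : Xb = fun ω => polarizer μ (1 / 2) (1 / 2) (X ω) := by
    funext ω
    rw [hXb, Quaternion.coe_mul_eq_smul, polarizer]
    module
  have hM := integral_polarizer_mul_star hμ hX hX₁ hX₂
  have hMj := integral_polarizer_mul_qj_mul_star hμ hX hX₁ hX₂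
  subst hXa' hXb'
  refine ⟨fun ω => by simp only [polarizer]; module, ?_, ?_, by rw [hM]; norm_num,
    by rw [hMj]; norm_num⟩
  · rw [← Quaternion.integral_mul_star, hM, hMj]
    simp only [Quaternion.coe_eq_smul_one, smul_mul_assoc, one_mul, mul_add, mul_one]
    module
  · rw [← Quaternion.integral_mul_star, hM, hMj]
    simp only [Quaternion.coe_eq_smul_one, smul_mul_assoc, one_mul, mul_sub, mul_one]
    module

/-- The polarizer decomposition with gain `K = 1/2` splits a signal into two uncorrelated
fully polarized components with antipodal polarization axes `±μ` and spectral densities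
`(S₀/2)(1 ± Φ)(1 ± μ)`. -/
theorem polarizer_decomposition {Ω : Type*} [MeasurableSpace Ω]
    (P : Measure Ω) [IsProbabilityMeasure P] (X : Ω → ℍ[ℝ])
    (S₀ Φ : ℝ) (hS₀ : 0 ≤ S₀) (hΦ : Φ ∈ Set.Icc (0 : ℝ) 1)
    (μ : ℍ[ℝ]) (hμ : IsPureUnit μ)
    (hint₁ : Integrable (fun ω => Quaternion.normSq (X ω)) P)
    (hint₂ : ∀ p q : ℍ[ℝ], Integrable (fun ω => p * X ω * q * star (X ω)) P)
    (hX₁ : ∫ ω, Quaternion.normSq (X ω) ∂P = S₀)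
    (hX₂ : ∫ ω, X ω * qj * star (X ω) ∂P = ((Φ * S₀ : ℝ) : ℍ[ℝ]) * μ)
    (Xa Xb : Ω → ℍ[ℝ])
    (hXa : ∀ ω, Xa ω = ((1 / 2 : ℝ) : ℍ[ℝ]) * (X ω - μ * X ω * qj))
    (hXb : ∀ ω, Xb ω = ((1 / 2 : ℝ) : ℍ[ℝ]) * (X ω + μ * X ω * qj)) :
    (∀ ω, X ω = Xa ω + Xb ω) ∧
    ((↑(∫ ω, Quaternion.normSq (Xa ω) ∂P) + ∫ ω, Xa ω * qj * star (Xa ω) ∂P : ℍ[ℝ]) =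
      ((S₀ / 2 * (1 + Φ) : ℝ) : ℍ[ℝ]) * (1 + μ)) ∧
    ((↑(∫ ω, Quaternion.normSq (Xb ω) ∂P) + ∫ ω, Xb ω * qj * star (Xb ω) ∂P : ℍ[ℝ]) =
      ((S₀ / 2 * (1 - Φ) : ℝ) : ℍ[ℝ]) * (1 - μ)) ∧
    (∫ ω, Xa ω * star (Xb ω) ∂P = 0 ∧ ∫ ω, Xa ω * qj * star (Xb ω) ∂P = 0) :=
  polarizer_decomposition_general P X S₀ Φ μ hμ hint₂ hX₁ hX₂ Xa Xb hXa hXb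
end
end
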